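/- There exist a constant C > 0 and a real number x₀ such that for all real x ≥ x₀, the maximal prime gap up to x satisfies d_max(x) ≥ log x − C · log log x; that is, there is an index n with p_{n+1} ≤ x and p_{n+1} − p_n ≥ log x − C · log log x. -/

import Mathlib

/-!
Take `n` odd, divisible by every odd prime `p ≤ z / 2`, and with `n ≡ -2 ^ v` modulo a prime
`q_v ∈ (2 ^ (v - 1) z, 2 ^ v z]` (Bertrand) for each `2 ^ v ≤ z`. Then `n + j` is composite for
`2 ≤ j ≤ z`: it is even if `j` is odd, divisible by an odd prime factor of `j` if `j` is even but
not a power of two, and divisible by `q_v` if `j = 2 ^ v`. By the Chinese remainder theorem such an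
`n` exists below `2 ^ z · 2 ^ O(log² z)`, because the primorial of `z / 2` is at most
`4 ^ (z / 2)` and only `log₂ z` further primes are used. Since `2 < e`, for `z = ⌈log x⌉` the run
lies below `x`, and the prime gap containing it has length at least `z ≥ log x`.
-/

open Finset Function

namespace Nat

lemma eight_mul_succ_sq_le_two_pow {K : ℕ} (hK : 10 ≤ K) : 8 * (K + 1) ^ 2 ≤ 2 ^ K := by
  induction K, hK using le_induction with
  | base => norm_num
  | succ K hK ih => rw [pow_succ 2 K]; nlinarith

lemma exists_modEq_of_injOn_prime {ι : Type*} (t : Finset ι) (s a : ι → ℕ)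
    (hs : ∀ i ∈ t, (s i).Prime) (hinj : Set.InjOn s t) :
    ∃ n < ∏ i ∈ t, s i, ∀ i ∈ t, n ≡ a i [MOD s i] := by
  have hs0 : ∀ i ∈ t, s i ≠ 0 := fun i hi => (hs i hi).ne_zero
  have hco : Set.Pairwise t (Coprime on s) := fun i hi j hj hij =>
    (coprime_primes (hs i hi) (hs j hj)).2 (hinj.ne hi hj hij)
  exact ⟨_, chineseRemainderOfFinset_lt_prod a s hs0 hco,
    (chineseRemainderOfFinset a s t hs0 hco).2⟩

lemma not_prime_add_of_odd_of_dvd {n z j : ℕ} (hn : Odd n)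
    (hdvd : ∀ p, p.Prime → p ≠ 2 → 2 * p ≤ z → p ∣ n)
    (hpow : ∀ v, 1 ≤ v → 2 ^ v ≤ z → ¬(n + 2 ^ v).Prime) (hj : 2 ≤ j) (hjz : j ≤ z) :
    ¬(n + j).Prime := by
  obtain ⟨v, m, hm, rfl⟩ := exists_eq_two_pow_mul_odd (by omega : j ≠ 0)
  have hn1 : 1 ≤ n := hn.pos
  obtain rfl | hv := eq_zero_or_pos v
  · rw [pow_zero, one_mul] at hj ⊢
    intro hp
    have := hp.even_iff.1 (hn.add_odd hm)
    omega
  obtain rfl | hm1 := eq_or_ne m 1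
  · rw [mul_one] at hjz ⊢
    exact hpow v hv hjz
  have hp := minFac_prime hm1
  have hp2 : m.minFac ≠ 2 := fun h => hm.not_two_dvd_nat (h ▸ minFac_dvd m)
  have hpm : m.minFac ≤ m := minFac_le hm.pos
  have h2v : 2 ≤ 2 ^ v := le_self_pow₀ one_le_two hv.ne'
  have h2p : 2 * m.minFac ≤ z := by nlinarith
  exact not_prime_of_dvd_of_lt (dvd_add (hdvd _ hp hp2 h2p) ((minFac_dvd m).mul_left _))
    hp.two_le (by nlinarith)

lemma exists_nth_prime_gap_of_not_prime {n z : ℕ} (hn : 1 ≤ n)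
    (hrun : ∀ j, 2 ≤ j → j ≤ z → ¬(n + j).Prime) :
    ∃ k, nth Prime (k + 1) ≤ 2 * (n + 1) ∧ nth Prime k + z ≤ nth Prime (k + 1) := by
  obtain ⟨k, hk⟩ : ∃ k, count Prime (n + 2) = k + 1 := exists_eq_succ_of_ne_zero <| by
    rw [Ne, Nat.count_eq_zero ⟨2, prime_two⟩, nth_prime_zero_eq_two]
    omega
  have hprev : nth Prime k < n + 2 := nth_lt_of_lt_count (by omega)
  have hnext : n + 2 ≤ nth Prime (k + 1) := hk ▸ le_nth_count infinite_setOfPred_prime _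
  obtain ⟨b, hb, hnb, hb2⟩ := exists_prime_lt_and_le_two_mul (n + 1) (by omega)
  refine ⟨k, ?_, ?_⟩
  · by_contra! h
    have := le_nth_of_lt_nth_succ (hb2.trans_lt h) hb
    omega
  · by_contra! h
    refine hrun (nth Prime (k + 1) - n) (by omega) (by omega) ?_
    rw [Nat.add_sub_cancel' (by omega)]
    exact prime_nth_prime _

lemma exists_odd_dvd_primes_dvd_add_two_pow {z : ℕ} (hz : 4 ≤ z) (K : ℕ) {q : ℕ → ℕ}
    (hq : ∀ i, (q i).Prime) (hzq : ∀ i, z < q i) (hinj : Injective q) :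
    ∃ n, primorial (z / 2) * ∏ i ∈ range K, q i ≤ n ∧
      n < 2 * (primorial (z / 2) * ∏ i ∈ range K, q i) ∧ Odd n ∧
      (∀ p, p.Prime → p ≠ 2 → 2 * p ≤ z → p ∣ n) ∧ ∀ i < K, q i ∣ n + 2 ^ (i + 1) := by
  set t := (primesLE (z / 2)).disjSum (range K)
  set s : ℕ ⊕ ℕ → ℕ := Sum.elim id q
  have hP : ∏ i ∈ t, s i = primorial (z / 2) * ∏ i ∈ range K, q i := prod_disjSum _ _ _
  obtain ⟨n₀, hn₀, hmod⟩ := exists_modEq_of_injOn_prime t s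
    -- `(q i - 1) * 2 ^ (i + 1)` is `-2 ^ (i + 1)` modulo `q i`, without truncated subtraction
    (Sum.elim (fun p => if p = 2 then 1 else 0) (fun i => (q i - 1) * 2 ^ (i + 1)))
    (by
      rintro (p | i) hi
      · exact prime_of_mem_primesLE (inl_mem_disjSum.1 hi)
      · exact hq i)
    (by
      rintro (p | i) hi (p' | i') hi' h <;> simp only [s, Sum.elim_inl, Sum.elim_inr, id] at h
      · rw [h]
      · have := le_of_mem_primesLE (inl_mem_disjSum.1 hi); have := hzq i'; omega
      · have := le_of_mem_primesLE (inl_mem_disjSum.1 hi'); have := hzq i; omega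
      · rw [hinj h])
  -- shifting by the product of the moduli makes `n` exceed each `q i`
  have hshift : ∀ i ∈ t, n₀ + ∏ i ∈ t, s i ≡ n₀ [MOD s i] := fun i hi => by
    simpa using (modEq_zero_iff_dvd.2 (dvd_prod_of_mem s hi)).add_left n₀
  rw [hP] at hn₀ hshift
  refine ⟨n₀ + primorial (z / 2) * ∏ i ∈ range K, q i, by omega, by omega, ?_, ?_, ?_⟩
  · have h2 : Sum.inl 2 ∈ t := inl_mem_disjSum.2 (mem_primesLE.2 ⟨by omega, prime_two⟩)
    exact odd_iff.2 ((hshift _ h2).trans (hmod _ h2))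
  · intro p hp hp2 hpz
    have hpt : Sum.inl p ∈ t := inl_mem_disjSum.2 (mem_primesLE.2 ⟨by omega, hp⟩)
    have := (hshift _ hpt).trans (hmod _ hpt)
    simp only [s, Sum.elim_inl, id, if_neg hp2] at this
    exact modEq_zero_iff_dvd.1 this
  · intro i hi
    have hit : Sum.inr i ∈ t := inr_mem_disjSum.2 (mem_range.2 hi)
    have := ((hshift _ hit).trans (hmod _ hit)).add_right (2 ^ (i + 1))
    simp only [s, Sum.elim_inr] at this
    rw [← add_one_mul, Nat.sub_add_cancel (hq i).one_le] at this
    exact modEq_zero_iff_dvd.1 (this.trans (modEq_zero_iff_dvd.2 (dvd_mul_right _ _)))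

lemma exists_not_prime_run (z : ℕ) (hz : 2 ^ 10 ≤ z) :
    ∃ n, 1 ≤ n ∧ (∀ j, 2 ≤ j → j ≤ z → ¬(n + j).Prime) ∧ 2 * (n + 1) ≤ 2 ^ (z + z / 4) := by
  set K := log 2 z
  have hK : 10 ≤ K := le_log_of_pow_le one_lt_two hz
  have hKz : 2 ^ K ≤ z := pow_log_le_self 2 (by omega)
  have hzK : z < 2 ^ (K + 1) := lt_pow_succ_log_self one_lt_two z
  choose q hq hlt hle using fun i => exists_prime_lt_and_le_two_mul (2 ^ i * z) (by positivity)
  have hzq : ∀ i, z < q i := fun i => (Nat.le_mul_of_pos_left z (by positivity)).trans_lt (hlt i)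
  have hmono : StrictMono q := strictMono_nat_of_lt_succ fun i =>
    (hle i).trans_lt (by simpa [pow_succ, mul_assoc, mul_comm, mul_left_comm] using hlt (i + 1))
  obtain ⟨n, hPn, hnP, hodd, hdvd, hdvd_pow⟩ :=
    exists_odd_dvd_primes_dvd_add_two_pow (by omega) K hq hzq hmono.injective
  have hQ : ∏ i ∈ range K, q i ≤ 2 ^ (2 * (K + 1) * K) := by
    rw [pow_mul]
    simpa using prod_le_pow_card (range K) q _ fun i hi => calc
      q i ≤ 2 ^ (i + 1) * z := by simpa [pow_succ, mul_assoc, mul_comm, mul_left_comm] using hle i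
      _ ≤ 2 ^ (K + 1) * 2 ^ (K + 1) :=
        Nat.mul_le_mul (pow_le_pow_right₀ one_le_two (by have := mem_range.1 hi; omega)) hzK.le
      _ = 2 ^ (2 * (K + 1)) := by ring
  refine ⟨n, hodd.pos, fun j hj hjz => not_prime_add_of_odd_of_dvd hodd hdvd ?_ hj hjz, ?_⟩
  · intro v hv hvz
    have hvK : v ≤ K := le_log_of_pow_le one_lt_two hvz
    have hqv := hdvd_pow (v - 1) (by omega)
    rw [Nat.sub_add_cancel hv] at hqv
    have : q (v - 1) ≤ ∏ i ∈ range K, q i :=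
      le_of_dvd (prod_pos fun i _ => (hq i).pos) (dvd_prod_of_mem q (mem_range.2 (by omega)))
    have := (Nat.le_mul_of_pos_left _ (primorial_pos (z / 2))).trans hPn
    exact not_prime_of_dvd_of_lt hqv (hq _).two_le (by have := Nat.two_pow_pos v; omega)
  · have hexp : 2 * (K + 1) * K + 2 ≤ z / 4 := by
      have := eight_mul_succ_sq_le_two_pow hK
      rw [Nat.le_div_iff_mul_le (by norm_num)]
      nlinarith
    calc 2 * (n + 1) ≤ 4 * (primorial (z / 2) * ∏ i ∈ range K, q i) := by omega
      _ ≤ 4 * (4 ^ (z / 2) * 2 ^ (2 * (K + 1) * K)) := by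
        gcongr
        exact primorial_le_four_pow _
      _ = 2 ^ (2 * (z / 2)) * 2 ^ (2 * (K + 1) * K + 2) := by
        rw [pow_mul 2 2, pow_add]; ring
      _ ≤ 2 ^ z * 2 ^ (z / 4) := by gcongr <;> omega
      _ = 2 ^ (z + z / 4) := (pow_add 2 z (z / 4)).symm

end Nat

lemma Real.two_pow_add_div_four_le_exp {z : ℕ} (hz : 8 ≤ z) :
    (2 : ℝ) ^ (z + z / 4) ≤ Real.exp (z - 1) := by
  rw [← Real.rpow_natCast, Real.rpow_def_of_pos two_pos, Real.exp_le_exp]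
  have hdiv : ((z / 4 : ℕ) : ℝ) ≤ z / 4 := Nat.cast_div_le
  have hz' : (8 : ℝ) ≤ z := by exact_mod_cast hz
  push_cast
  nlinarith [Real.log_pos one_lt_two, Real.log_two_lt_d9]

/-- There exist C > 0 and x₀ such that for all x ≥ x₀, the maximal prime gap
up to x satisfies d_max(x) ≥ log x − C·log log x: there is a pair of consecutive primes
p_k, p_{k+1} with p_{k+1} ≤ x and p_{k+1} − p_k ≥ log x − C·log log x. -/
theorem maximal_prime_gap_lower_bound :
    ∃ C : ℝ, 0 < C ∧ ∃ x₀ : ℝ, ∀ x : ℝ, x₀ ≤ x →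
      ∃ k : ℕ, (Nat.nth Nat.Prime (k + 1) : ℝ) ≤ x ∧
        (Nat.nth Nat.Prime (k + 1) : ℝ) - (Nat.nth Nat.Prime k : ℝ) ≥
          Real.log x - C * Real.log (Real.log x) := by
  refine ⟨1, one_pos, Real.exp (2 ^ 10), fun x hx => ?_⟩
  have hx0 : 0 < x := (Real.exp_pos _).trans_le hx
  have hL : (2 : ℝ) ^ 10 ≤ Real.log x := (Real.le_log_iff_exp_le hx0).2 hx
  set z := ⌈Real.log x⌉₊
  have hLz : Real.log x ≤ z := Nat.le_ceil _
  have hzL : (z : ℝ) < Real.log x + 1 := Nat.ceil_lt_add_one (by positivity)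
  have hz : 2 ^ 10 ≤ z := by exact_mod_cast hL.trans hLz
  obtain ⟨n, hn, hrun, hsize⟩ := Nat.exists_not_prime_run z hz
  obtain ⟨k, hup, hgap⟩ := Nat.exists_nth_prime_gap_of_not_prime hn hrun
  refine ⟨k, ?_, ?_⟩
  · calc (Nat.nth Nat.Prime (k + 1) : ℝ) ≤ ((2 ^ (z + z / 4) : ℕ) : ℝ) := by
          exact_mod_cast hup.trans hsize
      _ ≤ Real.exp (z - 1) := by
          push_cast
          exact Real.two_pow_add_div_four_le_exp (by omega)
      _ ≤ Real.exp (Real.log x) := Real.exp_le_exp.2 (by linarith)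
      _ = x := Real.exp_log hx0
  · have hgap' : (Nat.nth Nat.Prime k : ℝ) + z ≤ Nat.nth Nat.Prime (k + 1) := by
      exact_mod_cast hgap
    have := Real.log_nonneg (show 1 ≤ Real.log x by linarith)
    linarith
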